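/- arXiv:2106.05776 — 3 statements merged into one kernel-verified Lean document; each statement's English description precedes it below -/
import Mathlib

section
/- Let R : ℝ → Matrix n n ℂ be such that R(ω) is positive semidefinite Hermitian for each ω, and let R^{1/2}(ω) denote its positive semidefinite square root. Then for any finite set of frequencies {ω_α} and any t > 0, the block matrix with (α,β)-blocks γ^⋆(ω_α, ω_β, t)_{ij} = 2πt e^{i(ω_β−ω_α)t/2} sinc((ω_β−ω_α)t/2) Σ_k R^{1/2}_{jk}(ω_β) R^{1/2}_{ki}(ω_α) is positive semidefinite. -/
/-!
The sinc factor is a positive semidefinite kernel in the frequencies, because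
`t e^{i(b-a)t/2} sinc((b-a)t/2) = ∫₀ᵗ conj(e^{ias}) e^{ibs} ds` is an `L²(0,t)` Gram matrix.
The remaining factor `∑ₖ S(ω_β)_{jk} S(ω_α)_{ki}` is `BᴴB` for `B k (β, j) = S(ω_β)_{jk}`, since each
`S(ω)` is Hermitian. The block matrix is `2π` times the Hadamard product of the two, so the Schur
product theorem concludes.
-/

noncomputable def sinc (x : ℝ) : ℝ := if x = 0 then 1 else Real.sin x / x

open scoped ComplexOrder ComplexConjugate
open MeasureTheory Complex

namespace Matrix

theorem posSemidef_of_integral_conj_mul {𝕜 ι α : Type*} [RCLike 𝕜] [Finite ι]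
    [MeasurableSpace α] {μ : Measure α} {f : ι → α → 𝕜} (hf : ∀ i, MemLp (f i) 2 μ) :
    (of fun i j => ∫ x, conj (f i x) * f j x ∂μ).PosSemidef := by
  convert posSemidef_gram 𝕜 (fun i => (hf i).toLp (f i)) using 1
  ext i j
  rw [gram_apply, L2.inner_def]
  refine integral_congr_ae ?_
  filter_upwards [(hf i).coeFn_toLp, (hf j).coeFn_toLp] with x hi hj
  simp [hi, hj, mul_comm]

theorem posSemidef_of_forall_isHermitian_mul {𝕜 κ n : Type*} [RCLike 𝕜] [Finite κ] [Fintype n]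
    {A : κ → Matrix n n 𝕜} (hA : ∀ a, (A a).IsHermitian) :
    (of fun p q : κ × n => (A q.1 * A p.1) q.2 p.2).PosSemidef := by
  convert posSemidef_conjTranspose_mul_self (of fun k (q : κ × n) => A q.1 q.2 k) using 1
  ext p q
  simp only [of_apply, mul_apply, conjTranspose_apply]
  refine Finset.sum_congr rfl fun k _ => ?_
  rw [← conjTranspose_apply, (hA p.1).eq, mul_comm]

end Matrix

theorem integral_exp_I_mul (c t : ℝ) :
    ∫ s in (0 : ℝ)..t, exp (I * c * s) = t * exp (I * c * t / 2) * (sinc (c * t / 2) : ℂ) := by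
  rcases eq_or_ne c 0 with rfl | hc
  · simp [sinc]
  rcases eq_or_ne t 0 with rfl | ht
  · simp
  have hsinc : (sinc (c * t / 2) : ℂ) = sin (c * t / 2) / (c * t / 2) := by
    rw [sinc, if_neg (by positivity)]
    push_cast
    rfl
  set u := exp (I * c * t / 2) with hu
  have hu_ne : u ≠ 0 := exp_ne_zero _
  have hexp : exp (I * c * t) = u ^ 2 := by rw [hu, ← exp_nat_mul]; ring_nf
  have hexp_pos : exp (c * t / 2 * I) = u := by rw [hu]; ring_nf
  have hexp_neg : exp (-(c * t / 2) * I) = u⁻¹ := by rw [hu, ← exp_neg]; ring_nf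
  have hIc : I * c ≠ 0 := mul_ne_zero I_ne_zero (ofReal_ne_zero.mpr hc)
  rw [integral_exp_mul_complex hIc, hsinc, sin, hexp, hexp_pos, hexp_neg, ofReal_zero, mul_zero,
    exp_zero]
  field_simp
  linear_combination (u ^ 2 - 1) * I_sq

noncomputable def sincKernel (t a b : ℝ) : ℂ :=
  t * exp (I * (b - a) * t / 2) * (sinc ((b - a) * t / 2) : ℂ)

theorem sincKernel_eq_integral (t a b : ℝ) :
    sincKernel t a b = ∫ s in (0 : ℝ)..t, conj (exp (a * s * I)) * exp (b * s * I) := by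
  rw [sincKernel, ← ofReal_sub, ← integral_exp_I_mul]
  congr 1 with s
  rw [← exp_conj, ← exp_add]
  simp only [map_mul, conj_ofReal, conj_I]
  push_cast
  ring_nf

theorem posSemidef_sincKernel {ι : Type*} [Finite ι] (ω : ι → ℝ) {t : ℝ} (ht : 0 ≤ t) :
    (Matrix.of fun a b => sincKernel t (ω a) (ω b)).PosSemidef := by
  have hmem : ∀ a, MemLp (fun s : ℝ => exp (ω a * s * I)) 2 (volume.restrict (Set.Ioc 0 t)) :=
    fun a => MemLp.of_bound (by fun_prop) 1
      (.of_forall fun s => by rw [← ofReal_mul, norm_exp_ofReal_mul_I])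
  -- the order on `ℂ` from `ComplexOrder` and from `RCLike ℂ` agree only up to instance unfolding
  convert (transparency := .instances) Matrix.posSemidef_of_integral_conj_mul hmem using 2
  ext a b
  rw [sincKernel_eq_integral, intervalIntegral.integral_of_le ht]

theorem star_regularized_block_matrix_posSemidef_general
    {n : Type*} [Fintype n]
    (S : ℝ → Matrix n n ℂ)
    (hSpsd : ∀ ω, (S ω).PosSemidef)
    (m : ℕ) (ω : Fin m → ℝ) (t : ℝ) (ht : 0 < t) :
    (Matrix.of (fun p q : Fin m × n =>
      (2 * Real.pi * t : ℝ) *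
        Complex.exp (Complex.I * (ω q.1 - ω p.1) * t / 2) *
        (sinc ((ω q.1 - ω p.1) * t / 2) : ℝ) *
        ∑ k : n, S (ω q.1) q.2 k * S (ω p.1) k p.2)).PosSemidef := by
  have hK := (posSemidef_sincKernel ω ht.le).submatrix (Prod.fst : Fin m × n → Fin m)
  have hG := Matrix.posSemidef_of_forall_isHermitian_mul fun a => (hSpsd (ω a)).isHermitian
  convert (transparency := .instances)
    (hK.hadamard hG).smul (a := 2 * Real.pi) (by positivity) using 2
  ext p q
  simp only [Matrix.of_apply, Matrix.smul_apply, Matrix.hadamard_apply, Matrix.submatrix_apply,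
    Matrix.mul_apply, sincKernel, real_smul]
  push_cast
  ring

theorem star_regularized_block_matrix_posSemidef
    {n : Type*} [Fintype n] [DecidableEq n]
    (R S : ℝ → Matrix n n ℂ)
    (hRpsd : ∀ ω, (R ω).PosSemidef)
    (hSpsd : ∀ ω, (S ω).PosSemidef)
    (hSsq : ∀ ω, S ω * S ω = R ω)
    (m : ℕ) (ω : Fin m → ℝ) (t : ℝ) (ht : 0 < t) :
    (Matrix.of (fun p q : Fin m × n =>
      (2 * Real.pi * t : ℝ) *
        Complex.exp (Complex.I * (ω q.1 - ω p.1) * t / 2) *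
        (sinc ((ω q.1 - ω p.1) * t / 2) : ℝ) *
        ∑ k : n, S (ω q.1) q.2 k * S (ω p.1) k p.2)).PosSemidef :=
  star_regularized_block_matrix_posSemidef_general S hSpsd m ω t ht
end

section
/- For real ω ≠ ω′, the normalized coefficient γ(ω,ω′,t)/t = (1/t) e^{i(ω′−ω)t/2} ∫ℝ [t sinc((ω′−Ω)t/2)][t sinc((ω−Ω)t/2)] R(Ω) dΩ tends to 0 as t → ∞, provided R : ℝ → ℂ is integrable and bounded and continuous at ω and ω′. -/
open MeasureTheory Filter Complex

/-!
After the factor `1 / t` is absorbed, the integrand is `t sinc(a t) sinc(b t) R(Ω)` with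
`a = (ω' - Ω) / 2`, `b = (ω - Ω) / 2`. Since `|sinc x| ≤ min 1 |x|⁻¹`, it is bounded by
`|R(Ω)| / max |a| |b| ≤ 4 |R(Ω)| / |ω - ω'|` uniformly in `t`, and it is `O(1 / t)` for
`Ω ∉ {ω, ω'}`. Dominated convergence gives the limit; the phase factor has modulus one.
-/

open Topology

@[fun_prop]
lemma continuous_sinc : Continuous sinc := Real.continuous_sinc

lemma abs_sinc_le_one (x : ℝ) : |sinc x| ≤ 1 := Real.abs_sinc_le_one x

lemma abs_sinc_le_inv_abs {x : ℝ} (hx : x ≠ 0) : |sinc x| ≤ |x|⁻¹ := by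
  rw [sinc, if_neg hx, abs_div, div_eq_mul_inv]
  exact mul_le_of_le_one_left (by positivity) (Real.abs_sin_le_one x)

lemma mul_abs_sinc_mul_div_two_le {t : ℝ} (ht : 0 ≤ t) {x : ℝ} (hx : x ≠ 0) :
    t * |sinc (x * t / 2)| ≤ 2 / |x| := by
  rcases ht.eq_or_lt with rfl | ht
  · simp only [zero_mul]; positivity
  calc t * |sinc (x * t / 2)| ≤ t * |x * t / 2|⁻¹ := by
        gcongr; exact abs_sinc_le_inv_abs (by positivity)
    _ = 2 / |x| := by
        rw [abs_div, abs_mul, abs_of_pos ht, abs_two]; field_simp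

lemma abs_mul_sinc_mul_sinc_le {t : ℝ} (ht : 0 ≤ t) {x y : ℝ} (hxy : x ≠ y) :
    |t * sinc (x * t / 2) * sinc (y * t / 2)| ≤ 4 / |x - y| := by
  wlog hx : |x - y| / 2 ≤ |x| generalizing x y
  · have hy : |y - x| / 2 ≤ |y| := by
      rw [abs_sub_comm]; linarith [abs_sub x y]
    rw [mul_right_comm, abs_sub_comm]
    exact this hxy.symm hy
  have hd : 0 < |x - y| := abs_pos.mpr (sub_ne_zero.mpr hxy)
  rw [abs_mul, abs_mul, abs_of_nonneg ht]
  calc t * |sinc (x * t / 2)| * |sinc (y * t / 2)| ≤ 2 / |x| * 1 := by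
        gcongr
        · exact mul_abs_sinc_mul_div_two_le ht (abs_pos.mp (by linarith))
        · exact abs_sinc_le_one _
    _ ≤ 4 / |x - y| := by
        rw [mul_one, div_le_div_iff₀ (by linarith) hd]; linarith

lemma tendsto_mul_sinc_mul_sinc_atTop {x y : ℝ} (hx : x ≠ 0) (hy : y ≠ 0) :
    Tendsto (fun t => t * sinc (x * t / 2) * sinc (y * t / 2)) atTop (𝓝 0) := by
  have hbound : ∀ᶠ t in atTop, |t * sinc (x * t / 2) * sinc (y * t / 2)| ≤
      2 / |x| * (2 / |y|) * t⁻¹ := by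
    filter_upwards [eventually_gt_atTop 0] with t ht
    rw [abs_mul, abs_mul, abs_of_pos ht]
    calc t * |sinc (x * t / 2)| * |sinc (y * t / 2)|
        = t * |sinc (x * t / 2)| * (t * |sinc (y * t / 2)|) * t⁻¹ := by field_simp
      _ ≤ 2 / |x| * (2 / |y|) * t⁻¹ := by
        gcongr
        · exact mul_abs_sinc_mul_div_two_le ht.le hx
        · exact mul_abs_sinc_mul_div_two_le ht.le hy
  refine squeeze_zero_norm' hbound ?_
  simpa using tendsto_inv_atTop_zero.const_mul (2 / |x| * (2 / |y|))

lemma tendsto_integral_mul_sinc_mul_sinc {ω ω' : ℝ} (hne : ω ≠ ω') {R : ℝ → ℂ}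
    (hR : Integrable R) :
    Tendsto (fun t : ℝ => ∫ Ω, ((t * sinc ((ω' - Ω) * t / 2) * sinc ((ω - Ω) * t / 2) : ℝ) : ℂ)
      * R Ω) atTop (𝓝 0) := by
  rw [← integral_zero ℝ ℂ]
  refine tendsto_integral_filter_of_dominated_convergence (fun Ω => 4 / |ω' - ω| * ‖R Ω‖)
    (Eventually.of_forall fun t => ?_) ?_ (hR.norm.const_mul _) ?_
  · exact (Continuous.aestronglyMeasurable (by fun_prop)).mul hR.aestronglyMeasurable
  · filter_upwards [eventually_ge_atTop 0] with t ht
    refine Eventually.of_forall fun Ω => ?_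
    rw [norm_mul, Complex.norm_real, Real.norm_eq_abs]
    gcongr
    simpa using abs_mul_sinc_mul_sinc_le ht (sub_left_injective.ne hne.symm : ω' - Ω ≠ ω - Ω)
  · filter_upwards [Measure.ae_ne volume ω, Measure.ae_ne volume ω'] with Ω h h'
    simpa using ((continuous_ofReal.tendsto 0).comp (tendsto_mul_sinc_mul_sinc_atTop
      (sub_ne_zero.mpr h'.symm) (sub_ne_zero.mpr h.symm))).mul_const (R Ω)

theorem offdiagonal_rate_tendsto_zero_general (ω ω' : ℝ) (hne : ω ≠ ω')
    (R : ℝ → ℂ) (hR : Integrable R) :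
    Tendsto (fun t : ℝ =>
        (1 / (t : ℂ)) * Complex.exp (Complex.I * (ω' - ω) * t / 2) *
          ∫ Ω : ℝ, ((t : ℂ) * (sinc ((ω' - Ω) * t / 2) : ℝ)) *
            ((t : ℂ) * (sinc ((ω - Ω) * t / 2) : ℝ)) * R Ω)
      atTop (nhds 0) := by
  have hphase : IsBoundedUnder (· ≤ ·) atTop
      fun t : ℝ => ‖Complex.exp (Complex.I * (ω' - ω) * t / 2)‖ :=
    isBoundedUnder_of ⟨1, fun t => by rw [Complex.norm_exp]; simp⟩
  refine (isBoundedUnder_le_mul_tendsto_zero hphase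
    (tendsto_integral_mul_sinc_mul_sinc hne hR)).congr' ?_
  filter_upwards [eventually_ne_atTop 0] with t ht
  rw [← integral_const_mul, ← integral_const_mul]
  congr 1; ext Ω
  push_cast
  field_simp

theorem offdiagonal_rate_tendsto_zero (ω ω' : ℝ) (hne : ω ≠ ω')
    (R : ℝ → ℂ) (hR : Integrable R) (hbd : ∃ C : ℝ, ∀ x, ‖R x‖ ≤ C)
    (hcω : ContinuousAt R ω) (hcω' : ContinuousAt R ω') :
    Tendsto (fun t : ℝ =>
        (1 / (t : ℂ)) * Complex.exp (Complex.I * (ω' - ω) * t / 2) *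
          ∫ Ω : ℝ, ((t : ℂ) * (sinc ((ω' - Ω) * t / 2) : ℝ)) *
            ((t : ℂ) * (sinc ((ω - Ω) * t / 2) : ℝ)) * R Ω)
      atTop (nhds 0) :=
  offdiagonal_rate_tendsto_zero_general ω ω' hne R hR
end

section
/- For real ω and R : ℝ → ℝ integrable, bounded, nonnegative, and continuous at ω, the diagonal coefficient satisfies lim_{t→∞} γ(ω,ω,t)/t = 2π R(ω), where γ(ω,ω,t) = ∫ℝ [t sinc((ω−Ω)t/2)]² R(Ω) dΩ. -/
open MeasureTheory Filter

/-!
For `t ≠ 0` the integrand is `(t sinc((ω - Ω)t/2))² / t = 2π δ_{t/2}(ω - Ω)` with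
`δ_τ(x) = sin²(τx) / (πτx²)`. For `τ > 0` this kernel is nonnegative, is at most `1/(πτx²)`, hence
tends to `0` uniformly away from `0`, and its mass on any interval around `0` tends to
`(1/π) ∫ sinc² = 1`. So it is an approximate identity, and the peak-function theorem gives
`∫ δ_τ(ω - Ω) R(Ω) dΩ → R(ω)`.

The value `∫₀^∞ sinc² = π/2` comes from `1/x² = ∫₀^∞ s e^{-sx} ds` and Fubini, which reduce it to
the Laplace transform `∫₀^∞ e^{-sx} sin² x dx = 2/(s(s² + 4))` and to `∫₀^∞ 2/(s² + 4) ds = π/2`.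
-/

open Set Topology
open scoped Real

namespace Real

theorem sinc_mul_self (x : ℝ) : sinc x * x = sin x := by
  rcases eq_or_ne x 0 with rfl | hx
  · simp
  · rw [sinc_of_ne_zero hx, div_mul_cancel₀ _ hx]

theorem sinc_sq_mul_one_add_sq_le (x : ℝ) : sinc x ^ 2 * (1 + x ^ 2) ≤ 2 := by
  have h1 : sinc x ^ 2 ≤ 1 := by
    rw [sq_le_one_iff_abs_le_one]; exact abs_sinc_le_one x
  have h2 : (sinc x * x) ^ 2 ≤ 1 := by rw [sinc_mul_self]; exact sin_sq_le_one x
  nlinarith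

theorem integrable_sinc_sq : Integrable fun x ↦ sinc x ^ 2 := by
  refine (integrable_inv_one_add_sq.const_mul 2).mono' (by fun_prop) (ae_of_all _ fun x ↦ ?_)
  rw [norm_pow, norm_eq_abs, sq_abs, ← div_eq_mul_inv, le_div_iff₀ (by positivity)]
  exact sinc_sq_mul_one_add_sq_le x

theorem integral_exp_neg_mul_mul_sin_sq {s : ℝ} (hs : 0 < s) :
    ∫ x in Ioi 0, exp (-(s * x)) * sin x ^ 2 = 2 / (s * (s ^ 2 + 4)) := by
  set G : ℝ → ℝ := fun x ↦
    -1 / (2 * s) + s / (2 * (s ^ 2 + 4)) * cos (2 * x) - 1 / (s ^ 2 + 4) * sin (2 * x)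
  have hG : ∃ C, ∀ x, ‖G x‖ ≤ C := by
    have hper : Function.Periodic G π := fun x ↦ by
      simp only [G, mul_add, cos_add_two_pi, sin_add_two_pi]
    obtain ⟨C, hC⟩ := isBounded_iff_forall_norm_le.1
      (hper.isBounded_of_continuous pi_ne_zero (by fun_prop))
    exact ⟨C, fun x ↦ hC _ (mem_range_self x)⟩
  have hderiv (x : ℝ) :
      HasDerivAt (fun x ↦ exp (-(s * x)) * G x) (exp (-(s * x)) * sin x ^ 2) x := by
    have := (((hasDerivAt_id x).const_mul s).neg.exp).mul
      ((((hasDerivAt_id x).const_mul 2).cos.const_mul (s / (2 * (s ^ 2 + 4)))).const_add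
        (-1 / (2 * s)) |>.sub (((hasDerivAt_id x).const_mul 2).sin.const_mul (1 / (s ^ 2 + 4))))
    refine this.congr_deriv ?_
    simp only [id, Pi.sub_apply, Pi.neg_apply, sin_sq_eq_half_sub]
    field_simp
    ring
  have hexp : Tendsto (fun x ↦ exp (-(s * x))) atTop (𝓝 0) :=
    tendsto_exp_atBot.comp (tendsto_neg_atTop_atBot.comp (tendsto_id.const_mul_atTop hs))
  have hlim : Tendsto (fun x ↦ exp (-(s * x)) * G x) atTop (𝓝 0) :=
    hexp.zero_mul_isBoundedUnder_le (isBoundedUnder_of hG)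
  rw [integral_Ioi_of_hasDerivAt_of_nonneg' (fun x _ ↦ hderiv x) (fun x _ ↦ by positivity) hlim]
  simp only [G, mul_zero, neg_zero, exp_zero, cos_zero, sin_zero]
  field_simp
  ring

theorem integral_Ioi_mul_exp_neg_mul {x : ℝ} (hx : 0 < x) :
    ∫ s in Ioi 0, s * exp (-(x * s)) = (x ^ 2)⁻¹ := by
  have h := integral_rpow_mul_exp_neg_mul_Ioi (a := 2) two_pos hx
  norm_num [Gamma_two] at h
  simpa using h

theorem integral_Ioi_two_div_sq_add_four : ∫ s in Ioi 0, 2 / (s ^ 2 + 4) = π / 2 := by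
  have h := integral_comp_mul_left_Ioi (fun u ↦ (1 + u ^ 2)⁻¹) 0 (b := 2⁻¹) (by norm_num)
  rw [mul_zero, integral_Ioi_inv_one_add_sq, arctan_zero, sub_zero, smul_eq_mul] at h
  calc ∫ s in Ioi 0, 2 / (s ^ 2 + 4) = ∫ s in Ioi 0, 2⁻¹ * (1 + (2⁻¹ * s) ^ 2)⁻¹ := by
        congr 1 with s; field_simp; ring
    _ = π / 2 := by rw [integral_const_mul, h]; field_simp

theorem integral_Ioi_sinc_sq : ∫ x in Ioi 0, sinc x ^ 2 = π / 2 := by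
  set F : ℝ → ℝ → ℝ := fun x s ↦ s * exp (-(s * x)) * sin x ^ 2
  have hF_nonneg : ∀ x, ∀ s > 0, 0 ≤ F x s := fun x s hs ↦ by positivity
  have h_int_s : ∀ x > 0, ∫ s in Ioi 0, F x s = sinc x ^ 2 := fun x hx ↦ by
    calc ∫ s in Ioi 0, F x s = ∫ s in Ioi 0, sin x ^ 2 * (s * exp (-(x * s))) := by
          congr 1 with s; simp only [F]; ring_nf
      _ = sinc x ^ 2 := by
          rw [integral_const_mul, integral_Ioi_mul_exp_neg_mul hx, sinc_of_ne_zero hx.ne']; ring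
  have h_int_x : ∀ s > 0, ∫ x in Ioi 0, F x s = 2 / (s ^ 2 + 4) := fun s hs ↦ by
    simp only [F, mul_assoc, integral_const_mul, integral_exp_neg_mul_mul_sin_sq hs]
    field_simp
  have hF : Integrable (Function.uncurry F)
      ((volume.restrict (Ioi 0)).prod (volume.restrict (Ioi 0))) := by
    rw [integrable_prod_iff (by fun_prop)]
    constructor
    · filter_upwards [ae_restrict_mem measurableSet_Ioi] with x hx
      have h : Integrable (fun s ↦ s * exp (-(x * s))) (volume.restrict (Ioi 0)) :=
        .of_integral_ne_zero <| by
          rw [integral_Ioi_mul_exp_neg_mul hx]; exact inv_ne_zero (pow_pos hx 2).ne'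
      refine (h.const_mul (sin x ^ 2)).congr (ae_of_all _ fun s ↦ ?_)
      simp only [Function.uncurry_apply_pair, F]; ring_nf
    · refine integrable_sinc_sq.integrableOn.congr ?_
      filter_upwards [ae_restrict_mem measurableSet_Ioi] with x hx
      rw [← h_int_s x hx]
      refine setIntegral_congr_fun measurableSet_Ioi fun s hs ↦ ?_
      exact (norm_of_nonneg (hF_nonneg x s hs)).symm
  calc ∫ x in Ioi 0, sinc x ^ 2 = ∫ x in Ioi 0, ∫ s in Ioi 0, F x s :=
        setIntegral_congr_fun measurableSet_Ioi fun x hx ↦ (h_int_s x hx).symm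
    _ = ∫ s in Ioi 0, ∫ x in Ioi 0, F x s := integral_integral_swap hF
    _ = ∫ s in Ioi 0, 2 / (s ^ 2 + 4) := setIntegral_congr_fun measurableSet_Ioi h_int_x
    _ = π / 2 := integral_Ioi_two_div_sq_add_four

theorem integral_sinc_sq : ∫ x, sinc x ^ 2 = π := by
  have h := integral_add_compl (measurableSet_Iic (a := (0 : ℝ))) integrable_sinc_sq
  rw [compl_Iic, ← neg_zero, ← integral_comp_neg_Ioi] at h
  simp only [sinc_neg, neg_zero, integral_Ioi_sinc_sq] at h
  linarith

end Real

theorem tendstoUniformlyOn_zero_of_norm_le {ι α E : Type*} [SeminormedAddCommGroup E]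
    {l : Filter ι} {s : Set α} {f : ι → α → E} {b : ι → ℝ} (hb : Tendsto b l (𝓝 0))
    (hfb : ∀ᶠ i in l, ∀ x ∈ s, ‖f i x‖ ≤ b i) : TendstoUniformlyOn f 0 l s := by
  rw [SeminormedAddGroup.tendstoUniformlyOn_zero]
  intro ε hε
  filter_upwards [hfb, hb (Iio_mem_nhds hε)] with i hi hbi x hx
  exact (hi x hx).trans_lt hbi

/-- The paper's `δ_τ^{(2)}`. -/
noncomputable def fejerKernel (τ x : ℝ) : ℝ := τ / π * Real.sinc (τ * x) ^ 2

section fejerKernel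

variable {τ x : ℝ}

theorem fejerKernel_nonneg (hτ : 0 ≤ τ) (x : ℝ) : 0 ≤ fejerKernel τ x := by
  unfold fejerKernel; positivity

theorem continuous_fejerKernel (τ : ℝ) : Continuous (fejerKernel τ) := by
  unfold fejerKernel; fun_prop

theorem fejerKernel_le (hτ : 0 < τ) (hx : x ≠ 0) : fejerKernel τ x ≤ (π * τ * x ^ 2)⁻¹ := by
  rw [← one_div, le_div_iff₀ (by positivity)]
  calc fejerKernel τ x * (π * τ * x ^ 2) = Real.sin (τ * x) ^ 2 := by
        rw [fejerKernel, ← Real.sinc_mul_self]; field_simp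
    _ ≤ 1 := Real.sin_sq_le_one _

theorem tendsto_setIntegral_fejerKernel_Icc {a b : ℝ} (ha : a < 0) (hb : 0 < b) :
    Tendsto (fun τ ↦ ∫ x in Icc a b, fejerKernel τ x) atTop (𝓝 1) := by
  have h := (intervalIntegral_tendsto_integral Real.integrable_sinc_sq
    (tendsto_id.atTop_mul_const_of_neg ha) (tendsto_id.atTop_mul_const hb)).const_mul π⁻¹
  rw [Real.integral_sinc_sq, inv_mul_cancel₀ Real.pi_ne_zero] at h
  refine h.congr' ((eventually_gt_atTop 0).mono fun τ hτ ↦ ?_)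
  dsimp only [id]
  rw [integral_Icc_eq_integral_Ioc, ← intervalIntegral.integral_of_le (by linarith)]
  simp only [fejerKernel, intervalIntegral.integral_const_mul,
    intervalIntegral.integral_comp_mul_left (fun u ↦ Real.sinc u ^ 2) hτ.ne', smul_eq_mul]
  field_simp

theorem tendstoUniformlyOn_fejerKernel_compl {u : Set ℝ} (hu : u ∈ 𝓝 0) :
    TendstoUniformlyOn fejerKernel 0 atTop uᶜ := by
  obtain ⟨δ, hδ, hball⟩ := Metric.mem_nhds_iff.1 hu
  refine tendstoUniformlyOn_zero_of_norm_le (b := fun τ ↦ (π * τ * δ ^ 2)⁻¹) ?_ ?_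
  · exact tendsto_inv_atTop_zero.comp
      ((tendsto_id.const_mul_atTop Real.pi_pos).atTop_mul_const (pow_pos hδ 2))
  · filter_upwards [eventually_gt_atTop 0] with τ hτ x hx
    have hδx : δ ≤ |x| := by
      by_contra! h
      exact hx (hball (by rwa [Metric.mem_ball, Real.dist_0_eq_abs]))
    rw [Real.norm_of_nonneg (fejerKernel_nonneg hτ.le x)]
    have hx0 : x ≠ 0 := by rintro rfl; simp at hδx; linarith
    calc fejerKernel τ x ≤ (π * τ * x ^ 2)⁻¹ := fejerKernel_le hτ hx0
      _ ≤ (π * τ * δ ^ 2)⁻¹ :=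
          inv_anti₀ (by positivity)
            (mul_le_mul_of_nonneg_left (sq_le_sq.2 (by rwa [abs_of_pos hδ])) (by positivity))

theorem tendsto_integral_fejerKernel_smul {E : Type*} [NormedAddCommGroup E] [NormedSpace ℝ E]
    [CompleteSpace E]
    {g : ℝ → E} {x₀ : ℝ} (hg : Integrable g) (hc : ContinuousAt g x₀) :
    Tendsto (fun τ ↦ ∫ x, fejerKernel τ (x₀ - x) • g x) atTop (𝓝 (g x₀)) := by
  have hc' : Tendsto (fun y ↦ g (x₀ - y)) (𝓝 0) (𝓝 (g x₀)) := by
    have hsub := (continuous_sub_left x₀).tendsto 0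
    rw [sub_zero] at hsub
    exact hc.tendsto.comp hsub
  have h := tendsto_integral_peak_smul_of_integrable_of_tendsto measurableSet_Icc
    (Icc_mem_nhds (neg_lt_zero.2 one_pos) one_pos) measure_Icc_lt_top.ne
    ((eventually_ge_atTop 0).mono fun τ hτ ↦ fejerKernel_nonneg hτ)
    (fun u hu h0 ↦ tendstoUniformlyOn_fejerKernel_compl (hu.mem_nhds h0))
    (tendsto_setIntegral_fejerKernel_Icc (neg_lt_zero.2 one_pos) one_pos)
    (Eventually.of_forall fun τ ↦ (continuous_fejerKernel τ).aestronglyMeasurable)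
    (hg.comp_sub_left x₀) hc'
  refine h.congr fun τ ↦ ?_
  simpa using (integral_sub_left_eq_self (fun y ↦ fejerKernel τ y • g (x₀ - y)) volume x₀).symm

end fejerKernel

theorem sinc_eq_real_sinc : sinc = Real.sinc := rfl

theorem diagonal_rate_tendsto_markovian_general (ω : ℝ)
    (R : ℝ → ℝ) (hR : Integrable R)
    (hc : ContinuousAt R ω) :
    Tendsto (fun t : ℝ =>
        (∫ Ω : ℝ, (t * sinc ((ω - Ω) * t / 2)) ^ 2 * R Ω) / t)
      atTop (nhds (2 * Real.pi * R ω)) := by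
  have h := ((tendsto_integral_fejerKernel_smul hR hc).comp
    (tendsto_id.atTop_div_const two_pos)).const_mul (2 * π)
  refine h.congr' ((eventually_ne_atTop 0).mono fun t ht ↦ ?_)
  simp only [Function.comp_apply, id, smul_eq_mul, fejerKernel, ← integral_const_mul,
    ← integral_div, sinc_eq_real_sinc]
  congr 1 with Ω
  rw [show (ω - Ω) * t / 2 = t / 2 * (ω - Ω) by ring]
  field_simp

theorem diagonal_rate_tendsto_markovian (ω : ℝ)
    (R : ℝ → ℝ) (hR : Integrable R) (hbd : ∃ C : ℝ, ∀ x, |R x| ≤ C)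
    (hnn : ∀ x, 0 ≤ R x) (hc : ContinuousAt R ω) :
    Tendsto (fun t : ℝ =>
        (∫ Ω : ℝ, (t * sinc ((ω - Ω) * t / 2)) ^ 2 * R Ω) / t)
      atTop (nhds (2 * Real.pi * R ω)) :=
  diagonal_rate_tendsto_markovian_general ω R hR hc
end
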